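/- arXiv:1505.07551 — 2 statements merged into one kernel-verified Lean document; each statement's English description precedes it below -/
import Mathlib

section
/- For all indices μ > -1 and all 0 < x < y, the ratio of modified Bessel functions of the first kind satisfies the lower bound I_μ(y)/I_μ(x) > (x/y)^(μ+4) · e^(y−x). -/
/-!
Write `I_μ(2w) = w ^ μ ψ(w)` with `ψ(w) = ∑ c_k w^(2k)` and `c_k = 1 / (k! Γ(k + μ + 1))`, so that
`(k + 1)(k + 1 + μ) c_(k+1) = c_k`. The function `w ^ (μ + 2) e^(-2w) ψ(w)` is nondecreasing on
`w > 0`: for a partial sum of `ψ` its derivative is `w ^ (μ + 1) e^(-2w)` times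
`∑ c_k ((2k + μ + 2) w^(2k) - 2 w^(2k+1))`, and AM-GM in the form
`2 w^(2k+1) ≤ (k + 1) w^(2k) + w^(2k+2) / (k + 1)` makes this sum telescope down to at least
`(1 + μ) c_0` minus a tail term that vanishes as the partial sums grow. Hence `z² e^(-z) I_μ(z)` is
nondecreasing, which gives `I_μ(y) / I_μ(x) ≥ (x / y)² e^(y - x)`, and `(x / y)^(μ + 4) < (x / y)²`.
-/

open Real

/-- Modified Bessel function of the first kind. -/
noncomputable def besselI (μ z : ℝ) : ℝ :=
  ∑' k : ℕ, (z / 2) ^ (μ + 2 * (k : ℝ)) / ((Nat.factorial k : ℝ) * Real.Gamma ((k : ℝ) + μ + 1))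

open Filter Finset Topology

noncomputable def besselICoeff (μ : ℝ) (k : ℕ) : ℝ := ((k.factorial : ℝ) * Gamma (k + μ + 1))⁻¹

section

variable {μ : ℝ}

lemma besselICoeff_pos (hμ : -1 < μ) (k : ℕ) : 0 < besselICoeff μ k := by
  have : 0 < Gamma (k + μ + 1) := Gamma_pos_of_pos (by linarith [k.cast_nonneg (α := ℝ)])
  unfold besselICoeff
  positivity

lemma besselICoeff_succ (hμ : -1 < μ) (k : ℕ) :
    besselICoeff μ (k + 1) = besselICoeff μ k / ((k + 1) * (k + 1 + μ)) := by
  have hkμ : 0 < (k : ℝ) + μ + 1 := by linarith [k.cast_nonneg (α := ℝ)]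
  have hΓ : Gamma ((k + 1 : ℕ) + μ + 1) = (k + 1 + μ) * Gamma (k + μ + 1) := by
    rw [show ((k + 1 : ℕ) : ℝ) + μ + 1 = (k + μ + 1) + 1 by push_cast; ring,
      Gamma_add_one hkμ.ne']
    ring
  have := Gamma_pos_of_pos hkμ
  rw [besselICoeff, besselICoeff, hΓ, Nat.factorial_succ, Nat.cast_mul, Nat.cast_succ]
  field_simp

lemma add_mul_besselICoeff_succ (hμ : -1 < μ) (k : ℕ) :
    (k + 1 + μ) * besselICoeff μ (k + 1) = besselICoeff μ k / (k + 1) := by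
  have : 0 < (k : ℝ) + 1 + μ := by linarith [k.cast_nonneg (α := ℝ)]
  rw [besselICoeff_succ hμ]
  field_simp

lemma summable_besselICoeff_mul_pow (hμ : -1 < μ) (r : ℝ) :
    Summable fun k ↦ besselICoeff μ k * r ^ k := by
  refine summable_of_ratio_norm_eventually_le (r := 1 / 2) (by norm_num) ?_
  filter_upwards [eventually_ge_atTop ⌈2 * |r|⌉₊] with k hk
  have hk : 2 * |r| ≤ k := Nat.ceil_le.mp hk
  have hc := besselICoeff_pos hμ k
  have hkμ : 0 < (k : ℝ) + 1 + μ := by linarith [abs_nonneg r]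
  have hden : 2 * |r| ≤ (k + 1) * (k + 1 + μ) := by nlinarith
  rw [besselICoeff_succ hμ, norm_mul, norm_mul, norm_pow, norm_pow, Real.norm_of_nonneg hc.le,
    Real.norm_of_nonneg (div_nonneg hc.le (by positivity)), Real.norm_eq_abs, pow_succ,
    div_mul_eq_mul_div, div_le_iff₀ (by positivity)]
  have : 0 ≤ besselICoeff μ k * |r| ^ k := by positivity
  nlinarith

noncomputable def besselISeries (μ w : ℝ) : ℝ := ∑' k, besselICoeff μ k * w ^ (2 * k)

lemma summable_besselICoeff_mul_pow_two_mul (hμ : -1 < μ) (w : ℝ) :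
    Summable fun k ↦ besselICoeff μ k * w ^ (2 * k) := by
  simpa only [pow_mul] using summable_besselICoeff_mul_pow hμ (w ^ 2)

lemma besselICoeff_mul_pow_two_mul_nonneg (hμ : -1 < μ) (k : ℕ) (w : ℝ) :
    0 ≤ besselICoeff μ k * w ^ (2 * k) :=
  mul_nonneg (besselICoeff_pos hμ k).le ((even_two_mul k).pow_nonneg w)

lemma besselISeries_pos (hμ : -1 < μ) (w : ℝ) : 0 < besselISeries μ w :=
  (summable_besselICoeff_mul_pow_two_mul hμ w).tsum_pos
    (besselICoeff_mul_pow_two_mul_nonneg hμ · w) 0 (by simpa using besselICoeff_pos hμ 0)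

lemma besselI_eq_rpow_mul_besselISeries {z : ℝ} (hz : 0 < z) :
    besselI μ z = (z / 2) ^ μ * besselISeries μ (z / 2) := by
  rw [besselI, besselISeries, ← tsum_mul_left]
  refine tsum_congr fun k ↦ ?_
  rw [show μ + 2 * (k : ℝ) = μ + ((2 * k : ℕ) : ℝ) by push_cast; ring,
    rpow_add (half_pos hz), rpow_natCast, besselICoeff, div_eq_mul_inv]
  ring

lemma besselI_pos (hμ : -1 < μ) {z : ℝ} (hz : 0 < z) : 0 < besselI μ z := by
  rw [besselI_eq_rpow_mul_besselISeries hz]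
  exact mul_pos (rpow_pos_of_pos (by positivity) μ) (besselISeries_pos hμ _)

lemma besselICoeff_mul_bracket_ge (hμ : -1 < μ) (k : ℕ) (w : ℝ) :
    besselICoeff μ k * w ^ (2 * k) + (k + μ) * besselICoeff μ k * w ^ (2 * k)
        - (k + 1 + μ) * besselICoeff μ (k + 1) * w ^ (2 * (k + 1)) ≤
      besselICoeff μ k * ((2 * k + μ + 2) * w ^ (2 * k) - 2 * w ^ (2 * k + 1)) := by
  have hsq : 0 ≤ besselICoeff μ k * w ^ (2 * k) * ((k + 1) - w) ^ 2 / (k + 1) := by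
    have := besselICoeff_pos hμ k
    have := (even_two_mul k).pow_nonneg w
    positivity
  rw [add_mul_besselICoeff_succ hμ, mul_add_one, pow_add, pow_succ w (2 * k)]
  have expand : besselICoeff μ k * ((2 * k + μ + 2) * w ^ (2 * k) - 2 * (w ^ (2 * k) * w))
      - (besselICoeff μ k * w ^ (2 * k) + (k + μ) * besselICoeff μ k * w ^ (2 * k)
        - besselICoeff μ k / (k + 1) * (w ^ (2 * k) * w ^ 2))
      = besselICoeff μ k * w ^ (2 * k) * ((k + 1) - w) ^ 2 / (k + 1) := by
    field_simp
    ring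
  linarith

lemma sum_besselICoeff_mul_bracket_ge (hμ : -1 < μ) (N : ℕ) (w : ℝ) :
    (1 + μ) * besselICoeff μ 0 - (N + 1 + μ) * besselICoeff μ (N + 1) * w ^ (2 * (N + 1)) ≤
      ∑ k ∈ range (N + 1),
        besselICoeff μ k * ((2 * k + μ + 2) * w ^ (2 * k) - 2 * w ^ (2 * k + 1)) := by
  set T : ℕ → ℝ := fun j ↦ (j + μ) * besselICoeff μ j * w ^ (2 * j)
  have hsteps := sum_le_sum fun k (_ : k ∈ range (N + 1)) ↦ besselICoeff_mul_bracket_ge hμ k w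
  have hT : ∀ k : ℕ, (k + 1 + μ) * besselICoeff μ (k + 1) * w ^ (2 * (k + 1)) = T (k + 1) := by
    intro k
    simp only [T]
    push_cast
    ring
  simp only [hT, add_sub_assoc, sum_add_distrib] at hsteps
  rw [sum_range_sub' T] at hsteps
  have hP : besselICoeff μ 0 ≤ ∑ k ∈ range (N + 1), besselICoeff μ k * w ^ (2 * k) := by
    refine (single_le_sum (f := fun k ↦ besselICoeff μ k * w ^ (2 * k))
      (fun k _ ↦ besselICoeff_mul_pow_two_mul_nonneg hμ k w) (mem_range.mpr N.succ_pos)).trans_eq'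
      (by simp)
  have hT0 : T 0 = μ * besselICoeff μ 0 := by simp [T]
  rw [hT N]
  linarith

lemma hasDerivAt_rpow_mul_exp_mul_sum_besselICoeff (N : ℕ) {w : ℝ} (hw : 0 < w) :
    HasDerivAt (fun w ↦ w ^ (μ + 2) * exp (-2 * w) * ∑ k ∈ range N, besselICoeff μ k * w ^ (2 * k))
      (w ^ (μ + 1) * exp (-2 * w) *
        ∑ k ∈ range N, besselICoeff μ k * ((2 * k + μ + 2) * w ^ (2 * k) - 2 * w ^ (2 * k + 1)))
      w := by
  have hpow : HasDerivAt (fun w ↦ w ^ (μ + 2)) ((μ + 2) * w ^ (μ + 1)) w := by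
    convert hasDerivAt_rpow_const (p := μ + 2) (Or.inl hw.ne') using 3
    ring
  have hexp : HasDerivAt (fun w ↦ exp (-2 * w)) (exp (-2 * w) * -2) w := by
    simpa using ((hasDerivAt_id w).const_mul (-2)).exp
  have hsum : HasDerivAt (fun w ↦ ∑ k ∈ range N, besselICoeff μ k * w ^ (2 * k))
      (∑ k ∈ range N, besselICoeff μ k * ((2 * k : ℕ) * w ^ (2 * k - 1))) w :=
    HasDerivAt.fun_sum fun k _ ↦ (hasDerivAt_pow (2 * k) w).const_mul _
  refine ((hpow.mul hexp).mul hsum).congr_deriv ?_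
  have hw2 : w ^ (μ + 2) = w ^ (μ + 1) * w := by
    rw [show μ + 2 = (μ + 1) + 1 by ring, rpow_add_one hw.ne']
  simp only [Pi.mul_apply, hw2, mul_sum, ← sum_add_distrib]
  refine sum_congr rfl fun k _ ↦ ?_
  rcases k with _ | k
  · simp only [mul_zero, pow_zero, mul_one, CharP.cast_eq_zero, zero_tsub, zero_add, pow_one]
    ring
  · rw [show 2 * (k + 1) - 1 = 2 * k + 1 by omega]
    push_cast
    ring

lemma rpow_mul_exp_mul_sum_besselICoeff_le (hμ : -1 < μ) (N : ℕ) {x y : ℝ} (hx : 0 < x)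
    (hxy : x ≤ y)
    (hN : (N + 1 + μ) * besselICoeff μ (N + 1) * y ^ (2 * (N + 1)) ≤ (1 + μ) * besselICoeff μ 0) :
    x ^ (μ + 2) * exp (-2 * x) * ∑ k ∈ range (N + 1), besselICoeff μ k * x ^ (2 * k) ≤
      y ^ (μ + 2) * exp (-2 * y) * ∑ k ∈ range (N + 1), besselICoeff μ k * y ^ (2 * k) := by
  have hpos : ∀ w ∈ Set.Icc x y, 0 < w := fun w hw ↦ hx.trans_le hw.1
  have hderiv := fun w (hw : w ∈ Set.Icc x y) ↦
    hasDerivAt_rpow_mul_exp_mul_sum_besselICoeff (μ := μ) (N + 1) (hpos w hw)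
  refine monotoneOn_of_hasDerivWithinAt_nonneg (convex_Icc x y)
    (fun w hw ↦ (hderiv w hw).continuousAt.continuousWithinAt)
    (fun w hw ↦ (hderiv w (interior_subset hw)).hasDerivWithinAt) (fun w hw ↦ ?_)
    ⟨le_rfl, hxy⟩ ⟨hxy, le_rfl⟩ hxy
  have hw := interior_subset hw
  have hbracket := sum_besselICoeff_mul_bracket_ge hμ N w
  have herr : (N + 1 + μ) * besselICoeff μ (N + 1) * w ^ (2 * (N + 1)) ≤
      (N + 1 + μ) * besselICoeff μ (N + 1) * y ^ (2 * (N + 1)) := by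
    have := besselICoeff_pos hμ (N + 1)
    have : 0 < (N : ℝ) + 1 + μ := by linarith [N.cast_nonneg (α := ℝ)]
    gcongr
    exacts [(hpos w hw).le, hw.2]
  have := rpow_pos_of_pos (hpos w hw) (μ + 1)
  have := exp_pos (-2 * w)
  have : 0 ≤ ∑ k ∈ range (N + 1),
      besselICoeff μ k * ((2 * k + μ + 2) * w ^ (2 * k) - 2 * w ^ (2 * k + 1)) := by linarith
  positivity

lemma monotoneOn_rpow_mul_exp_mul_besselISeries (hμ : -1 < μ) :
    MonotoneOn (fun w ↦ w ^ (μ + 2) * exp (-2 * w) * besselISeries μ w) (Set.Ioi 0) := by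
  intro x hx y _ hxy
  have hpartial (w : ℝ) := (((summable_besselICoeff_mul_pow_two_mul hμ w).hasSum.tendsto_sum_nat
    |>.comp (tendsto_add_atTop_nat 1)).const_mul (w ^ (μ + 2) * exp (-2 * w)))
  have hsmall : ∀ᶠ N : ℕ in atTop, (N + 1 + μ) * besselICoeff μ (N + 1) * y ^ (2 * (N + 1)) ≤
      (1 + μ) * besselICoeff μ 0 := by
    have hlim : Tendsto (fun N ↦ y ^ 2 * (besselICoeff μ N * y ^ (2 * N))) atTop (𝓝 0) := by
      simpa using (summable_besselICoeff_mul_pow_two_mul hμ y).tendsto_atTop_zero.const_mul (y ^ 2)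
    have hc₀ : 0 < (1 + μ) * besselICoeff μ 0 := mul_pos (by linarith) (besselICoeff_pos hμ 0)
    filter_upwards [hlim.eventually_lt_const hc₀] with N hN
    calc (N + 1 + μ) * besselICoeff μ (N + 1) * y ^ (2 * (N + 1))
        = y ^ 2 * (besselICoeff μ N * y ^ (2 * N)) / (N + 1) := by
          rw [add_mul_besselICoeff_succ hμ, mul_add_one, pow_add]
          ring
      _ ≤ y ^ 2 * (besselICoeff μ N * y ^ (2 * N)) :=
          div_le_self (mul_nonneg (sq_nonneg y) (besselICoeff_mul_pow_two_mul_nonneg hμ N y))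
            (by linarith [N.cast_nonneg (α := ℝ)])
      _ ≤ (1 + μ) * besselICoeff μ 0 := hN.le
  exact le_of_tendsto_of_tendsto (hpartial x) (hpartial y)
    (hsmall.mono fun N hN ↦ rpow_mul_exp_mul_sum_besselICoeff_le hμ N hx hxy hN)

lemma monotoneOn_sq_mul_exp_mul_besselI (hμ : -1 < μ) :
    MonotoneOn (fun z ↦ z ^ 2 * exp (-z) * besselI μ z) (Set.Ioi 0) := by
  have hrescale : ∀ z : ℝ, 0 < z → z ^ 2 * exp (-z) * besselI μ z =
      4 * ((z / 2) ^ (μ + 2) * exp (-2 * (z / 2)) * besselISeries μ (z / 2)) := by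
    intro z hz
    rw [besselI_eq_rpow_mul_besselISeries hz, rpow_add (half_pos hz), rpow_two]
    ring_nf
  intro x hx y hy hxy
  simp only [hrescale x hx, hrescale y hy]
  gcongr 4 * ?_
  exact monotoneOn_rpow_mul_exp_mul_besselISeries hμ (half_pos (Set.mem_Ioi.mp hx))
    (half_pos (Set.mem_Ioi.mp hy)) (by linarith)

lemma sq_div_mul_exp_sub_le_besselI_div (hμ : -1 < μ) {x y : ℝ} (hx : 0 < x)
    (hxy : x ≤ y) : (x / y) ^ 2 * exp (y - x) ≤ besselI μ y / besselI μ x := by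
  have hy := hx.trans_le hxy
  have hmono := monotoneOn_sq_mul_exp_mul_besselI hμ hx hy hxy
  rw [le_div_iff₀ (besselI_pos hμ hx)]
  calc (x / y) ^ 2 * exp (y - x) * besselI μ x
      = x ^ 2 * exp (-x) * besselI μ x * (exp y / y ^ 2) := by
        rw [exp_sub, exp_neg]
        field_simp
    _ ≤ y ^ 2 * exp (-y) * besselI μ y * (exp y / y ^ 2) := by gcongr
    _ = besselI μ y := by
        rw [exp_neg]
        field_simp

end

theorem besselI_ratio_lower (μ x y : ℝ) (hμ : -1 < μ) (hx : 0 < x) (hxy : x < y) :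
    (x / y) ^ (μ + 4) * Real.exp (y - x) < besselI μ y / besselI μ x := by
  have hy := hx.trans hxy
  have hpow : (x / y) ^ (μ + 4) < (x / y) ^ 2 := by
    rw [← rpow_two]
    exact rpow_lt_rpow_of_exponent_gt (div_pos hx hy) ((div_lt_one hy).mpr hxy) (by linarith)
  calc (x / y) ^ (μ + 4) * exp (y - x) < (x / y) ^ 2 * exp (y - x) := by gcongr
    _ ≤ besselI μ y / besselI μ x := sq_div_mul_exp_sub_le_besselI_div hμ hx hxy.le
end

section
/- For every t > 0, every x ∈ (0,1), and every y ∈ (1/2, 1), one has ((y/(2−y))^2 − 1 < p(t,1,y)/p(t,1,2−y) − 1 < ((2−y)/y)^{2μ+4} − 1, where p(t,a,b) = (1/(2t)) (ab)^{−μ} exp(−(a²+b²)/(2t)) I_μ(ab/t) is the transition density (with respect to the speed measure) of the Bessel process with index μ > -1 reflected at 0. -/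
open Real

/-- Transition density (w.r.t. the speed measure) of the reflected Bessel process. -/
noncomputable def besselDensity (μ t a b : ℝ) : ℝ :=
  (1 / (2 * t)) * (a * b) ^ (-μ) * Real.exp (-(a ^ 2 + b ^ 2) / (2 * t)) * besselI μ (a * b / t)

/-!
Write `I_μ(z) = (z/2)^μ G(z)` with `G(z) = ∑ c_k z^{2k}`, `c_k = 1 / (4^k k! Γ(k+μ+1))`, and put
`H(x) = e^{-x} G(x)`. Completing the square gives `p(t,1,w) = C_t e^{-(1-w)²/(2t)} H(w/t)`, and the
Gaussian factors at `w = y` and `w = 2 - y` agree, so the ratio is `H(a) / H(b)` with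
`a = y/t < b = (2-y)/t`. Both bounds then follow from `x ↦ H(x) / x²` being strictly decreasing and
`x ↦ x^{2μ+4} H(x)` strictly increasing on `(0, ∞)`, that is, from `x G' < (x + 2) G` and
`x G < x G' + (2μ + 4) G`. These are proved term by term with AM-GM, pairing neighbouring terms of
`a_k = c_k x^{2k}` through the recurrence `x² a_k = 4 (k+1) (k+1+μ) a_{k+1}`.
-/

open Set

section BesselRecurrence

variable {μ x S T : ℝ} {a : ℕ → ℝ}

theorem hasSum_succ_of_hasSum (hS : HasSum a S) : HasSum (fun k => a (k + 1)) (S - a 0) := by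
  simpa using (hasSum_nat_add_iff' 1).mpr hS

theorem hasSum_succ_mul_succ_of_hasSum (hT : HasSum (fun k : ℕ => k * a k) T) :
    HasSum (fun k : ℕ => (k + 1) * a (k + 1)) T := by
  simpa using (hasSum_nat_add_iff' 1).mpr hT

variable (hμ : -1 < μ) (ha : ∀ k, 0 ≤ a k) (ha0 : 0 < a 0)
  (hrec : ∀ k : ℕ, x ^ 2 * a k = 4 * (k + 1) * (k + 1 + μ) * a (k + 1))
  (hS : HasSum a S) (hT : HasSum (fun k : ℕ => k * a k) T)
include hμ ha ha0 hrec hS hT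

theorem mul_sum_lt_of_besselRecurrence : x * S < 2 * T + (2 * μ + 4) * S := by
  have hterm : ∀ k : ℕ, x * a k ≤ (k * a k + a k) + ((k + 1) * a (k + 1) + μ * a (k + 1)) := by
    intro k
    have hk : (0 : ℝ) < 4 * (k + 1) := by positivity
    -- AM-GM: `4 (k + 1) x ≤ 4 (k + 1)² + x²`
    refine le_of_mul_le_mul_left ?_ hk
    nlinarith [mul_nonneg (ha k) (sq_nonneg (x - 2 * (k + 1))), hrec k]
  have hS1 := hasSum_succ_of_hasSum hS
  have hle := hasSum_le hterm (hS.mul_left x)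
    ((hT.add hS).add ((hasSum_succ_mul_succ_of_hasSum hT).add (hS1.mul_left μ)))
  have ha0S : 0 ≤ S - a 0 := hS1.nonneg fun k => ha (k + 1)
  nlinarith [mul_nonneg (by linarith : (0 : ℝ) ≤ μ + 3) ha0S]

theorem two_mul_sum_lt_of_besselRecurrence (hx : 0 < x) : 2 * T < (x + 2) * S := by
  have hterm : ∀ k : ℕ, 2 * ((k + 1) * a (k + 1)) ≤
      (2 * a (k + 1) + x / 2 * a (k + 1)) + x / 2 * a k := by
    intro k
    -- AM-GM: `2 k x ≤ x² / 2 + 2 k²`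
    refine le_of_mul_le_mul_left ?_ hx
    have hk : (k : ℝ) ^ 2 ≤ (k + 1) * (k + 1 + μ) := by nlinarith
    nlinarith [mul_nonneg (ha (k + 1)) (sq_nonneg (x - 2 * k)), hrec k,
      mul_le_mul_of_nonneg_right hk (ha (k + 1))]
  have hS1 := hasSum_succ_of_hasSum hS
  have hle := hasSum_le hterm ((hasSum_succ_mul_succ_of_hasSum hT).mul_left 2)
    (((hS1.mul_left 2).add (hS1.mul_left (x / 2))).add (hS.mul_left (x / 2)))
  nlinarith [mul_pos hx ha0]

end BesselRecurrence

theorem strictMonoOn_rpow_mul_of_hasDerivAt {H H' : ℝ → ℝ} {q : ℝ}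
    (hH : ∀ x ∈ Ioi (0 : ℝ), HasDerivAt H (H' x) x)
    (hpos : ∀ x ∈ Ioi (0 : ℝ), 0 < x * H' x + q * H x) :
    StrictMonoOn (fun x => x ^ q * H x) (Ioi 0) := by
  have hderiv : ∀ x ∈ Ioi (0 : ℝ),
      HasDerivAt (fun x => x ^ q * H x) (q * x ^ (q - 1) * H x + x ^ q * H' x) x := fun x hx =>
    (Real.hasDerivAt_rpow_const (Or.inl (ne_of_gt hx))).mul (hH x hx)
  refine strictMonoOn_of_hasDerivWithinAt_pos (convex_Ioi 0)
    (f' := fun x => q * x ^ (q - 1) * H x + x ^ q * H' x)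
    (fun x hx => (hderiv x hx).continuousAt.continuousWithinAt)
    (fun x hx => ?_) (fun x hx => ?_)
  · rw [interior_Ioi] at hx
    exact (hderiv x hx).hasDerivWithinAt
  · rw [interior_Ioi] at hx
    have hx0 : (0 : ℝ) < x := hx
    have : q * x ^ (q - 1) * H x + x ^ q * H' x = x ^ (q - 1) * (x * H' x + q * H x) := by
      rw [Real.rpow_sub_one hx0.ne']
      field_simp
      ring
    rw [this]
    exact mul_pos (Real.rpow_pos_of_pos hx0 _) (hpos x hx)

open Nat in
noncomputable def besselCoeff (μ : ℝ) (k : ℕ) : ℝ := ((4 : ℝ) ^ k * k ! * Gamma (k + μ + 1))⁻¹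

noncomputable def besselSeries (μ x : ℝ) : ℝ := ∑' k : ℕ, besselCoeff μ k * x ^ (2 * k)

noncomputable def besselSeriesDeriv (μ x : ℝ) : ℝ :=
  ∑' k : ℕ, besselCoeff μ k * (2 * k * x ^ (2 * k - 1))

theorem mul_besselSeriesDeriv (μ x : ℝ) :
    x * besselSeriesDeriv μ x = 2 * ∑' k : ℕ, k * (besselCoeff μ k * x ^ (2 * k)) := by
  rw [besselSeriesDeriv, ← tsum_mul_left, ← tsum_mul_left]
  refine tsum_congr fun k => ?_
  rcases Nat.eq_zero_or_pos k with rfl | hk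
  · simp
  · rw [← pow_sub_one_mul (by omega : 2 * k ≠ 0) x]
    ring

section BesselSeries

variable {μ : ℝ} (hμ : -1 < μ)
include hμ

theorem besselCoeff_pos (k : ℕ) : 0 < besselCoeff μ k := by
  have : 0 < Gamma (k + μ + 1) := Gamma_pos_of_pos (by linarith [k.cast_nonneg (α := ℝ)])
  unfold besselCoeff
  positivity

theorem besselCoeff_mul_pow_nonneg (x : ℝ) (k : ℕ) : 0 ≤ besselCoeff μ k * x ^ (2 * k) :=
  mul_nonneg (besselCoeff_pos hμ k).le ((even_two_mul k).pow_nonneg x)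

theorem besselCoeff_eq_mul_besselCoeff_succ (k : ℕ) :
    besselCoeff μ k = 4 * (k + 1) * (k + 1 + μ) * besselCoeff μ (k + 1) := by
  have hk : (k : ℝ) + μ + 1 ≠ 0 := by linarith [k.cast_nonneg (α := ℝ)]
  simp only [besselCoeff, Nat.factorial_succ, pow_succ, Nat.cast_mul, Nat.cast_succ]
  rw [show (k : ℝ) + 1 + μ + 1 = k + μ + 1 + 1 by ring, Gamma_add_one hk]
  field_simp
  ring

theorem summable_succ_mul_besselCoeff_mul_pow (x : ℝ) :
    Summable fun k : ℕ => (k + 1) * besselCoeff μ k * x ^ (2 * k) := by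
  refine summable_of_ratio_norm_eventually_le (r := 1 / 2) (by norm_num) ?_
  filter_upwards [Filter.eventually_ge_atTop ⌈x ^ 2⌉₊] with k hk
  have hxk : x ^ 2 ≤ k := Nat.ceil_le.mp hk
  have hc := besselCoeff_pos hμ (k + 1)
  have hp : 0 ≤ x ^ (2 * k) := (even_two_mul k).pow_nonneg x
  have hk : (0 : ℝ) ≤ k := k.cast_nonneg
  have hratio : (k + 2) * x ^ 2 ≤ 2 * (k + 1) ^ 2 * (k + 1 + μ) :=
    calc (k + 2) * x ^ 2 ≤ (k + 2) * k := by gcongr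
      _ ≤ 2 * (k + 1) ^ 2 * k := by nlinarith [mul_nonneg hk (mul_nonneg hk hk)]
      _ ≤ 2 * (k + 1) ^ 2 * (k + 1 + μ) := by gcongr; linarith
  rw [Real.norm_of_nonneg (mul_nonneg (mul_nonneg (by positivity) hc.le)
      ((even_two_mul (k + 1)).pow_nonneg x)), Real.norm_of_nonneg (mul_nonneg (mul_nonneg
      (by positivity) (besselCoeff_pos hμ k).le) hp),
    besselCoeff_eq_mul_besselCoeff_succ hμ k, mul_add, pow_add]
  push_cast
  nlinarith [mul_le_mul_of_nonneg_left hratio (mul_nonneg hc.le hp)]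

theorem summable_besselCoeff_mul_pow (x : ℝ) :
    Summable fun k : ℕ => besselCoeff μ k * x ^ (2 * k) :=
  (summable_succ_mul_besselCoeff_mul_pow hμ x).of_nonneg_of_le
    (besselCoeff_mul_pow_nonneg hμ x)
    (fun k => by
      rw [mul_assoc]
      exact le_mul_of_one_le_left (besselCoeff_mul_pow_nonneg hμ x k)
        (by simp))

theorem summable_natCast_mul_besselCoeff_mul_pow (x : ℝ) :
    Summable fun k : ℕ => k * (besselCoeff μ k * x ^ (2 * k)) :=
  (summable_succ_mul_besselCoeff_mul_pow hμ x).of_nonneg_of_le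
    (fun k => mul_nonneg k.cast_nonneg (besselCoeff_mul_pow_nonneg hμ x k))
    (fun k => by
      rw [mul_assoc]
      exact mul_le_mul_of_nonneg_right (by simp)
        (besselCoeff_mul_pow_nonneg hμ x k))

theorem besselSeries_pos (x : ℝ) : 0 < besselSeries μ x :=
  (summable_besselCoeff_mul_pow hμ x).tsum_pos
    (besselCoeff_mul_pow_nonneg hμ x) 0
    (by simpa using besselCoeff_pos hμ 0)

theorem hasDerivAt_besselSeries (x : ℝ) :
    HasDerivAt (besselSeries μ) (besselSeriesDeriv μ x) x := by
  set R := |x| + 1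
  have hR : 1 ≤ R := by simp [R]
  have hbound : ∀ (k : ℕ), ∀ y ∈ Metric.ball (0 : ℝ) R,
      ‖besselCoeff μ k * (2 * k * y ^ (2 * k - 1))‖ ≤
        2 * ((k + 1) * besselCoeff μ k * R ^ (2 * k)) := by
    intro k y hy
    rw [mem_ball_zero_iff, Real.norm_eq_abs] at hy
    have hc := besselCoeff_pos hμ k
    have hy' : |y| ^ (2 * k - 1) ≤ R ^ (2 * k) :=
      (pow_le_pow_left₀ (abs_nonneg y) hy.le _).trans (pow_le_pow_right₀ hR (Nat.sub_le _ _))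
    rw [Real.norm_eq_abs, abs_mul, abs_mul, abs_mul, abs_pow, abs_of_pos hc, abs_two,
      Nat.abs_cast]
    nlinarith [mul_le_mul_of_nonneg_left hy' (by positivity : (0 : ℝ) ≤ 2 * k * besselCoeff μ k),
      mul_nonneg hc.le (pow_nonneg (zero_le_one.trans hR) (2 * k))]
  refine hasDerivAt_tsum_of_isPreconnected
    ((summable_succ_mul_besselCoeff_mul_pow hμ R).mul_left 2) Metric.isOpen_ball
    (convex_ball 0 R).isPreconnected (fun k y _ => ?_) hbound
    (Metric.mem_ball_self (by positivity)) (summable_besselCoeff_mul_pow hμ 0) (by simp [R])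
  simpa using (hasDerivAt_pow (2 * k) y).const_mul (besselCoeff μ k)

theorem besselCoeff_mul_pow_recurrence (x : ℝ) (k : ℕ) :
    x ^ 2 * (besselCoeff μ k * x ^ (2 * k)) =
      4 * (k + 1) * (k + 1 + μ) * (besselCoeff μ (k + 1) * x ^ (2 * (k + 1))) := by
  rw [besselCoeff_eq_mul_besselCoeff_succ hμ k]
  ring

theorem mul_besselSeries_lt (x : ℝ) :
    x * besselSeries μ x < x * besselSeriesDeriv μ x + (2 * μ + 4) * besselSeries μ x := by
  rw [mul_besselSeriesDeriv]
  exact mul_sum_lt_of_besselRecurrence hμ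
    (besselCoeff_mul_pow_nonneg hμ x)
    (by simpa using besselCoeff_pos hμ 0) (besselCoeff_mul_pow_recurrence hμ x)
    (summable_besselCoeff_mul_pow hμ x).hasSum
    (summable_natCast_mul_besselCoeff_mul_pow hμ x).hasSum

theorem mul_besselSeriesDeriv_lt {x : ℝ} (hx : 0 < x) :
    x * besselSeriesDeriv μ x < (x + 2) * besselSeries μ x := by
  rw [mul_besselSeriesDeriv]
  exact two_mul_sum_lt_of_besselRecurrence hμ
    (besselCoeff_mul_pow_nonneg hμ x)
    (by simpa using besselCoeff_pos hμ 0) (besselCoeff_mul_pow_recurrence hμ x)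
    (summable_besselCoeff_mul_pow hμ x).hasSum
    (summable_natCast_mul_besselCoeff_mul_pow hμ x).hasSum hx

theorem hasDerivAt_exp_neg_mul_besselSeries (x : ℝ) :
    HasDerivAt (fun x => exp (-x) * besselSeries μ x)
      (exp (-x) * (besselSeriesDeriv μ x - besselSeries μ x)) x :=
  (((hasDerivAt_neg x).exp).fun_mul (hasDerivAt_besselSeries hμ x)).congr_deriv (by ring)

theorem strictAntiOn_exp_neg_mul_besselSeries_div_sq :
    StrictAntiOn (fun x => exp (-x) * besselSeries μ x / x ^ 2) (Ioi 0) := by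
  have hmono := strictMonoOn_rpow_mul_of_hasDerivAt (q := -2)
    (H := fun x => -(exp (-x) * besselSeries μ x))
    (fun x _ => (hasDerivAt_exp_neg_mul_besselSeries hμ x).neg) fun x hx => by
      have := mul_besselSeriesDeriv_lt hμ hx
      nlinarith [exp_pos (-x)]
  intro x hx y hy hxy
  have := hmono hx hy hxy
  simp only [rpow_neg hx.le, rpow_neg hy.le, rpow_two] at this
  simp only [div_eq_inv_mul]
  linarith

theorem strictMonoOn_rpow_mul_exp_neg_mul_besselSeries :
    StrictMonoOn (fun x => x ^ (2 * μ + 4) * (exp (-x) * besselSeries μ x)) (Ioi 0) :=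
  strictMonoOn_rpow_mul_of_hasDerivAt (fun x _ => hasDerivAt_exp_neg_mul_besselSeries hμ x)
    fun x _ => by
      have := mul_besselSeries_lt hμ x
      nlinarith [exp_pos (-x)]

theorem besselI_eq_rpow_mul_besselSeries {z : ℝ} (hz : 0 < z) :
    besselI μ z = (z / 2) ^ μ * besselSeries μ z := by
  rw [besselI, besselSeries, ← tsum_mul_left]
  refine tsum_congr fun k => ?_
  have hΓ : 0 < Gamma (k + μ + 1) := Gamma_pos_of_pos (by linarith [k.cast_nonneg (α := ℝ)])
  have hpow : (z / 2) ^ (μ + 2 * (k : ℝ)) = (z / 2) ^ μ * (z ^ (2 * k) / 4 ^ k) := by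
    rw [rpow_add (by positivity), mul_comm, rpow_mul_natCast (by positivity), rpow_two, pow_mul,
      div_pow, div_pow]
    norm_num
    ring
  rw [hpow, besselCoeff]
  field_simp

theorem besselDensity_one_eq {t w : ℝ} (ht : 0 < t) (hw : 0 < w) :
    besselDensity μ t 1 w = (2 * t)⁻¹ * ((2 * t) ^ μ)⁻¹ * exp (-(1 - w) ^ 2 / (2 * t)) *
      (exp (-(w / t)) * besselSeries μ (w / t)) := by
  rw [besselDensity, one_mul, one_pow, besselI_eq_rpow_mul_besselSeries hμ (by positivity),
    show w / t / 2 = w / (2 * t) by ring, div_rpow hw.le (by positivity), rpow_neg hw.le,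
    show -(1 - w) ^ 2 / (2 * t) = -(1 + w ^ 2) / (2 * t) + w / t by field_simp; ring, exp_add]
  have : 0 < w ^ μ := rpow_pos_of_pos hw μ
  have : 0 < (2 * t) ^ μ := rpow_pos_of_pos (by positivity) μ
  field_simp
  rw [mul_assoc, ← exp_add, add_neg_cancel, exp_zero, mul_one]

end BesselSeries

theorem density_ratio_at_one_general (μ t y : ℝ) (hμ : -1 < μ) (ht : 0 < t)
    (hy1 : 1/2 < y) (hy2 : y < 1) :
    (y / (2 - y)) ^ (2 : ℕ) - 1 <
      besselDensity μ t 1 y / besselDensity μ t 1 (2 - y) - 1 ∧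
    besselDensity μ t 1 y / besselDensity μ t 1 (2 - y) - 1 <
      ((2 - y) / y) ^ (2 * μ + 4) - 1 := by
  set H : ℝ → ℝ := fun x => exp (-x) * besselSeries μ x
  have hy : 0 < y := by linarith
  have hy' : 0 < 2 - y := by linarith
  have ha : 0 < y / t := div_pos hy ht
  have hb : 0 < (2 - y) / t := div_pos hy' ht
  have hab : y / t < (2 - y) / t := div_lt_div_of_pos_right (by linarith) ht
  have hHb : 0 < H ((2 - y) / t) := mul_pos (exp_pos _) (besselSeries_pos hμ _)
  have hratio : besselDensity μ t 1 y / besselDensity μ t 1 (2 - y) =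
      H (y / t) / H ((2 - y) / t) := by
    rw [besselDensity_one_eq hμ ht hy, besselDensity_one_eq hμ ht hy',
      show (1 - (2 - y)) ^ 2 = (1 - y) ^ 2 by ring, mul_div_mul_left _ _ (by positivity)]
  rw [hratio]
  refine ⟨sub_lt_sub_right ?_ _, sub_lt_sub_right ?_ _⟩
  · have hanti := strictAntiOn_exp_neg_mul_besselSeries_div_sq hμ ha hb hab
    rw [show y / (2 - y) = (y / t) / ((2 - y) / t) by field_simp, div_pow,
      div_lt_div_iff₀ (by positivity) hHb]
    rw [div_lt_div_iff₀ (by positivity) (by positivity)] at hanti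
    linarith
  · have hmono := strictMonoOn_rpow_mul_exp_neg_mul_besselSeries hμ ha hb hab
    rw [show (2 - y) / y = ((2 - y) / t) / (y / t) by field_simp, div_rpow hb.le ha.le,
      div_lt_div_iff₀ hHb (rpow_pos_of_pos ha _)]
    linarith

theorem density_ratio_at_one (μ t x y : ℝ) (hμ : -1 < μ) (ht : 0 < t)
    (hx1 : 0 < x) (hx2 : x < 1) (hy1 : 1/2 < y) (hy2 : y < 1) :
    (y / (2 - y)) ^ (2 : ℕ) - 1 <
      besselDensity μ t 1 y / besselDensity μ t 1 (2 - y) - 1 ∧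
    besselDensity μ t 1 y / besselDensity μ t 1 (2 - y) - 1 <
      ((2 - y) / y) ^ (2 * μ + 4) - 1 :=
  density_ratio_at_one_general μ t y hμ ht hy1 hy2
end
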